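/- Let q ∈ ℂ with 0 < |q| < 1. For n, l ∈ ℤ and m, k ∈ ℕ define the operator ⟨n,m,k,l⟩ on H by ⟨n,m,k,l⟩ = Aⁿ Bᵐ (B*)ᵏ Dˡ if n ≥ 0 and ⟨n,m,k,l⟩ = (A*)^{−n} Bᵐ (B*)ᵏ Dˡ if n < 0, where Dˡ := (D*)^{−l} for l < 0. Then the family { ⟨n,m,k,l⟩ : n, l ∈ ℤ, m, k ∈ ℕ } is linearly independent over ℂ in the algebra of bounded operators on H. (This combines the linear-basis theorem for 𝒪(U_q(2)) with the faithfulness of the defining representation π.) -/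

import Mathlib

open scoped ComplexConjugate

noncomputable section

/-- The Hilbert space `H = ℓ²(ℕ × ℤ × ℤ)` over `ℂ`. -/
abbrev H : Type := lp (fun _ : ℕ × ℤ × ℤ => ℂ) 2

/-- The standard orthonormal basis vectors of `H`. -/
noncomputable def e (i : ℕ × ℤ × ℤ) : H := lp.single 2 i 1

/-- The Haar state `h(x) = (1-|q|²) Σ_{n≥0} |q|^{2n} ⟨e_{n,0,0}, x e_{n,0,0}⟩`. -/
noncomputable def haar (q : ℂ) (x : H →L[ℂ] H) : ℂ :=
  (1 - (‖q‖ : ℂ) ^ 2) *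
    ∑' n : ℕ, ((‖q‖ : ℂ) ^ (2 * n)) *
      inner (𝕜 := ℂ) (e (n, 0, 0)) (x (e (n, 0, 0)))

/-- The basis element `⟨n,m,k,l⟩` of `𝒪(U_q(2))` in the defining representation. -/
noncomputable def word (A B D : H →L[ℂ] H) (n : ℤ) (m k : ℕ) (l : ℤ) : H →L[ℂ] H :=
  (if 0 ≤ n then A ^ n.toNat else (star A) ^ (-n).toNat) * B ^ m * (star B) ^ k *
    (if 0 ≤ l then D ^ l.toNat else (star D) ^ (-l).toNat)

namespace S19
local notation "⟪" x ", " y "⟫" => @inner ℂ _ _ x y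

lemma e_apply (i j : ℕ × ℤ × ℤ) : (e i : ∀ _ : ℕ × ℤ × ℤ, ℂ) j = if j = i then 1 else 0 := by
  by_cases h : j = i
  · subst h; simp [e, lp.single_apply_self]
  · simp [e, lp.single_apply_ne _ _ _ h, h]

lemma inner_e_left (i : ℕ × ℤ × ℤ) (v : H) : ⟪e i, v⟫ = v i := by
  rw [e, lp.inner_single_left]; simp [RCLike.inner_apply]

lemma inner_e_e (i j : ℕ × ℤ × ℤ) : ⟪e i, e j⟫ = if i = j then 1 else 0 := by
  rw [inner_e_left, e_apply]

lemma ext_e {v w : H} (h : ∀ i, ⟪e i, v⟫ = ⟪e i, w⟫) : v = w := by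
  apply lp.ext; funext i
  rw [← inner_e_left i v, ← inner_e_left i w, h]

variable {q : ℂ} {A B D : H →L[ℂ] H}

section star

lemma starB_apply (hB : ∀ (n : ℕ) (r s : ℤ), B (e (n, r, s)) = (q ^ n) • e (n, r + 1, s))
    (n : ℕ) (r s : ℤ) : (star B) (e (n, r, s)) = ((conj q) ^ n) • e (n, r - 1, s) := by
  apply ext_e
  rintro ⟨a, b, c⟩
  rw [ContinuousLinearMap.star_eq_adjoint, ContinuousLinearMap.adjoint_inner_right, hB,
    inner_smul_left, inner_smul_right, inner_e_e, inner_e_e, map_pow]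
  have hiff : ((a, b + 1, c) = ((n : ℕ), r, s)) ↔ ((a, b, c) = ((n : ℕ), r - 1, s)) := by
    simp only [Prod.mk.injEq]; omega
  simp only [hiff]
  split_ifs with h
  · obtain ⟨h1, h2, h3⟩ : a = n ∧ b = r - 1 ∧ c = s := by simpa [Prod.ext_iff] using h
    subst h1; ring
  · simp

lemma starD_apply (hD : ∀ (n : ℕ) (r s : ℤ), D (e (n, r, s)) =
      ((conj q / (‖q‖ : ℂ)) ^ (2 * r)) • e (n, r, s + 1))
    (n : ℕ) (s : ℤ) : (star D) (e (n, 0, s)) = e (n, 0, s - 1) := by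
  apply ext_e
  rintro ⟨a, b, c⟩
  rw [ContinuousLinearMap.star_eq_adjoint, ContinuousLinearMap.adjoint_inner_right, hD,
    inner_smul_left, inner_e_e, inner_e_e]
  have hiff : ((a, b, c + 1) = ((n : ℕ), 0, s)) ↔ ((a, b, c) = ((n : ℕ), 0, s - 1)) := by
    simp only [Prod.mk.injEq]; omega
  simp only [hiff]
  split_ifs with h
  · obtain ⟨h1, h2, h3⟩ : a = n ∧ b = 0 ∧ c = s - 1 := by simpa [Prod.ext_iff] using h
    subst h2
    simp
  · simp

end star

/-- scalar for `A^j` acting at level `n`. -/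
def alpha (q : ℂ) (n j : ℕ) : ℝ :=
  ∏ i ∈ Finset.range j, Real.sqrt (1 - ‖q‖ ^ (2 * (n + i + 1)))

lemma alpha_pos (hq1 : ‖q‖ < 1) (n j : ℕ) : 0 < alpha q n j := by
  apply Finset.prod_pos
  intro i _
  apply Real.sqrt_pos.2
  have : ‖q‖ ^ (2 * (n + i + 1)) < 1 :=
    pow_lt_one₀ (norm_nonneg q) hq1 (by omega)
  linarith

lemma Apow (hA : ∀ (n : ℕ) (r s : ℤ), A (e (n, r, s)) =
      ((Real.sqrt (1 - ‖q‖ ^ (2 * (n + 1))) : ℝ) : ℂ) • e (n + 1, r, s))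
    (j n : ℕ) (r s : ℤ) :
    (A ^ j) (e (n, r, s)) = ((alpha q n j : ℝ) : ℂ) • e (n + j, r, s) := by
  induction j with
  | zero => simp [alpha]
  | succ j ih =>
    rw [pow_succ', ContinuousLinearMap.mul_apply, ih, map_smul, hA, smul_smul]
    have h1 : alpha q n (j + 1)
        = alpha q n j * Real.sqrt (1 - ‖q‖ ^ (2 * (n + j + 1))) :=
      Finset.prod_range_succ _ _
    rw [show n + (j + 1) = n + j + 1 by omega, h1]
    push_cast
    ring_nf

lemma Bpow (hB : ∀ (n : ℕ) (r s : ℤ), B (e (n, r, s)) = (q ^ n) • e (n, r + 1, s))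
    (m n : ℕ) (r s : ℤ) :
    (B ^ m) (e (n, r, s)) = (q ^ (n * m)) • e (n, r + m, s) := by
  induction m with
  | zero => simp
  | succ m ih =>
    rw [pow_succ', ContinuousLinearMap.mul_apply, ih, map_smul, hB, smul_smul]
    rw [show r + (m : ℤ) + 1 = r + ((m : ℕ) + 1 : ℕ) by push_cast; ring]
    rw [← pow_add]
    ring_nf

lemma starBpow (hB : ∀ (n : ℕ) (r s : ℤ), B (e (n, r, s)) = (q ^ n) • e (n, r + 1, s))
    (k n : ℕ) (r s : ℤ) :
    ((star B) ^ k) (e (n, r, s)) = ((conj q) ^ (n * k)) • e (n, r - k, s) := by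
  induction k with
  | zero => simp
  | succ k ih =>
    rw [pow_succ', ContinuousLinearMap.mul_apply, ih, map_smul, starB_apply hB, smul_smul]
    rw [show r - (k : ℤ) - 1 = r - ((k : ℕ) + 1 : ℕ) by push_cast; ring]
    rw [← pow_add]
    ring_nf

lemma Dpow (hD : ∀ (n : ℕ) (r s : ℤ), D (e (n, r, s)) =
      ((conj q / (‖q‖ : ℂ)) ^ (2 * r)) • e (n, r, s + 1))
    (j n : ℕ) (s : ℤ) : (D ^ j) (e (n, 0, s)) = e (n, 0, s + j) := by
  induction j with
  | zero => simp
  | succ j ih =>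
    rw [pow_succ', ContinuousLinearMap.mul_apply, ih, hD]
    rw [show s + (j : ℤ) + 1 = s + ((j : ℕ) + 1 : ℕ) by push_cast; ring]
    norm_num

lemma starDpow (hD : ∀ (n : ℕ) (r s : ℤ), D (e (n, r, s)) =
      ((conj q / (‖q‖ : ℂ)) ^ (2 * r)) • e (n, r, s + 1))
    (j n : ℕ) (s : ℤ) : ((star D) ^ j) (e (n, 0, s)) = e (n, 0, s - j) := by
  induction j with
  | zero => simp
  | succ j ih =>
    rw [pow_succ', ContinuousLinearMap.mul_apply, ih, starD_apply hD]
    rw [show s - (j : ℤ) - 1 = s - ((j : ℕ) + 1 : ℕ) by push_cast; ring]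

lemma Dint (hD : ∀ (n : ℕ) (r s : ℤ), D (e (n, r, s)) =
      ((conj q / (‖q‖ : ℂ)) ^ (2 * r)) • e (n, r, s + 1))
    (l : ℤ) (n : ℕ) :
    (if 0 ≤ l then D ^ l.toNat else (star D) ^ (-l).toNat) (e (n, 0, 0)) = e (n, 0, l) := by
  split_ifs with h
  · rw [Dpow hD, show (0 : ℤ) + (l.toNat : ℤ) = l by omega]
  · rw [starDpow hD, show (0 : ℤ) - ((-l).toNat : ℤ) = l by omega]


def alpha0 (q : ℂ) (n0 : ℕ) (n : ℤ) : ℝ :=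
  if 0 ≤ n then alpha q n0 n.toNat else alpha q ((n0 : ℤ) + n).toNat (-n).toNat

lemma alpha0_pos (hq1 : ‖q‖ < 1) (n0 : ℕ) (n : ℤ) : 0 < alpha0 q n0 n := by
  unfold alpha0; split_ifs <;> exact alpha_pos hq1 _ _

variable (hA : ∀ (n : ℕ) (r s : ℤ), A (e (n, r, s)) =
      ((Real.sqrt (1 - ‖q‖ ^ (2 * (n + 1))) : ℝ) : ℂ) • e (n + 1, r, s))
    (hB : ∀ (n : ℕ) (r s : ℤ), B (e (n, r, s)) = (q ^ n) • e (n, r + 1, s))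
    (hD : ∀ (n : ℕ) (r s : ℤ), D (e (n, r, s)) =
      ((conj q / (‖q‖ : ℂ)) ^ (2 * r)) • e (n, r, s + 1))

include hA hB hD in
lemma phi_eq (p0 p : ℤ × ℕ × ℕ × ℤ) (n0 : ℕ)
    (h0 : 0 ≤ (n0 : ℤ) + p0.1) (h1 : 0 ≤ (n0 : ℤ) + p.1) :
    ⟪e (((n0 : ℤ) + p0.1).toNat, ((p0.2.1 : ℤ) - p0.2.2.1, p0.2.2.2)),
      word A B D p.1 p.2.1 p.2.2.1 p.2.2.2 (e (n0, 0, 0))⟫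
    = if p.1 = p0.1 ∧ (p.2.1 : ℤ) - p.2.2.1 = (p0.2.1 : ℤ) - p0.2.2.1 ∧ p.2.2.2 = p0.2.2.2
      then ((alpha0 q n0 p0.1 : ℝ) : ℂ) * q ^ (n0 * p.2.1) * (conj q) ^ (n0 * p.2.2.1)
      else 0 := by
  obtain ⟨n, m, k, l⟩ := p
  obtain ⟨n', m0, k0, l0⟩ := p0
  simp only at h0 h1 ⊢
  rw [word]
  simp only [ContinuousLinearMap.mul_apply]
  rw [Dint hD, starBpow hB, map_smul, Bpow hB, smul_smul]
  by_cases hn : 0 ≤ n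
  · rw [if_pos hn, map_smul, Apow hA, smul_smul, inner_smul_right, inner_e_e]
    by_cases hc : n = n' ∧ (m : ℤ) - k = (m0 : ℤ) - k0 ∧ l = l0
    · obtain ⟨hc1, hc2, hc3⟩ := hc
      have hidx : ((((n0 : ℤ) + n').toNat, (((m0 : ℤ) - k0 : ℤ), l0)) : ℕ × ℤ × ℤ)
          = ((n0 + n.toNat : ℕ), ((0 - (k : ℤ) + m : ℤ), l)) := by
        simp only [Prod.mk.injEq]; omega
      rw [if_pos hidx, if_pos ⟨hc1, hc2, hc3⟩]
      rw [alpha0, if_pos (hc1 ▸ hn)]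
      rw [← hc1]
      ring
    · rw [if_neg hc, if_neg, mul_zero]
      intro heq
      apply hc
      obtain ⟨e1, e2, e3⟩ : ((n0 : ℤ) + n').toNat = n0 + n.toNat
          ∧ (m0 : ℤ) - k0 = 0 - k + m ∧ l0 = l := by simpa [Prod.ext_iff] using heq
      exact ⟨by omega, by omega, e3.symm⟩
  · rw [if_neg hn, ← star_pow, ContinuousLinearMap.star_eq_adjoint,
      ContinuousLinearMap.adjoint_inner_right, Apow hA, inner_smul_left, inner_smul_right,
      inner_e_e, Complex.conj_ofReal]
    by_cases hc : n = n' ∧ (m : ℤ) - k = (m0 : ℤ) - k0 ∧ l = l0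
    · obtain ⟨hc1, hc2, hc3⟩ := hc
      have hidx : (((((n0 : ℤ) + n').toNat + (-n).toNat : ℕ), (((m0 : ℤ) - k0 : ℤ), l0)) : ℕ × ℤ × ℤ)
          = ((n0 : ℕ), ((0 - (k : ℤ) + m : ℤ), l)) := by
        simp only [Prod.mk.injEq]; omega
      rw [if_pos hidx, if_pos ⟨hc1, hc2, hc3⟩]
      rw [alpha0, if_neg (by omega : ¬ 0 ≤ n'), ← hc1]
      ring
    · rw [if_neg hc, if_neg]
      · ring
      · intro heq
        apply hc
        obtain ⟨e1, e2, e3⟩ : ((n0 : ℤ) + n').toNat + (-n).toNat = n0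
            ∧ (m0 : ℤ) - k0 = 0 - k + m ∧ l0 = l := by simpa [Prod.ext_iff] using heq
        exact ⟨by omega, by omega, e3.symm⟩


lemma scalar_id (q c0 gp : ℂ) (n0 m k m0 k0 : ℕ) (h : m + k0 = k + m0) :
    c0 * (gp * (((q * conj q) ^ n0) ^ (m + k0)))
      = (gp * (c0 * q ^ (n0 * m) * (conj q) ^ (n0 * k))) * (q ^ (n0 * k0) * (conj q) ^ (n0 * m0)) := by
  have h1 : ((q * conj q) ^ n0) ^ (m + k0)
      = (q ^ (n0 * m) * q ^ (n0 * k0)) * ((conj q) ^ (n0 * k) * (conj q) ^ (n0 * m0)) := by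
    have e1 : n0 * (m + k0) = n0 * m + n0 * k0 := by ring
    have e2 : n0 * (m + k0) = n0 * k + n0 * m0 := by rw [h]; ring
    rw [← pow_mul, mul_pow]
    nth_rewrite 2 [e2]
    rw [e1, pow_add, pow_add]
  rw [h1]
  ring

end S19

open S19 in
/-- the family `⟨n,m,k,l⟩` (for `n, l ∈ ℤ`, `m, k ∈ ℕ`) is linearly
independent over `ℂ` in the algebra of bounded operators on `H`. -/
theorem stmt19 (q : ℂ) (hq0 : 0 < ‖q‖) (hq1 : ‖q‖ < 1)
    (A B D : H →L[ℂ] H)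
    (hA : ∀ (n : ℕ) (r s : ℤ), A (e (n, r, s)) =
      ((Real.sqrt (1 - ‖q‖ ^ (2 * (n + 1))) : ℝ) : ℂ) • e (n + 1, r, s))
    (hB : ∀ (n : ℕ) (r s : ℤ), B (e (n, r, s)) = (q ^ n) • e (n, r + 1, s))
    (hD : ∀ (n : ℕ) (r s : ℤ), D (e (n, r, s)) =
      ((conj q / (‖q‖ : ℂ)) ^ (2 * r)) • e (n, r, s + 1)) :
    LinearIndependent ℂ
      (fun p : ℤ × ℕ × ℕ × ℤ => word A B D p.1 p.2.1 p.2.2.1 p.2.2.2) := by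
  classical
  rw [linearIndependent_iff']
  intro s g hrel p0 hp0
  set m0 : ℕ := p0.2.1 with hm0
  set k0 : ℕ := p0.2.2.1 with hk0
  -- the filtered index set
  set sf : Finset (ℤ × ℕ × ℕ × ℤ) := s.filter (fun p =>
    p.1 = p0.1 ∧ (p.2.1 : ℤ) - p.2.2.1 = (p0.2.1 : ℤ) - p0.2.2.1 ∧ p.2.2.2 = p0.2.2.2) with hsf
  set Bnd : ℕ := s.sup (fun p => (-p.1).toNat) with hBnd
  set x : ℕ → ℂ := fun n0 => ((‖q‖ : ℂ) ^ 2) ^ n0 with hx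
  have hqq : q * conj q = (‖q‖ : ℂ) ^ 2 := by
    rw [Complex.mul_conj, ← Complex.sq_norm]
    push_cast
    ring
  have key : ∀ n0 : ℕ, Bnd ≤ n0 → ∑ p ∈ sf, g p * (x n0) ^ (p.2.1 + k0) = 0 := by
    intro n0 hn0
    have h0 : ∀ p ∈ s, 0 ≤ (n0 : ℤ) + p.1 := by
      intro p hp
      have h' : (-p.1).toNat ≤ Bnd := Finset.le_sup (f := fun p : ℤ × ℕ × ℕ × ℤ => (-p.1).toNat) hp
      omega
    set c0 : ℂ := ((alpha0 q n0 p0.1 : ℝ) : ℂ) with hc0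
    set eT : H := e (((n0 : ℤ) + p0.1).toNat, ((p0.2.1 : ℤ) - p0.2.2.1, p0.2.2.2)) with heT
    have hz : ∑ p ∈ s, g p *
        (inner ℂ eT (word A B D p.1 p.2.1 p.2.2.1 p.2.2.2 (e (n0, 0, 0))) : ℂ) = 0 := by
      have h2 := congrArg
        (fun X : H →L[ℂ] H => (inner ℂ eT (X (e (n0, 0, 0))) : ℂ)) hrel
      simpa [ContinuousLinearMap.sum_apply, ContinuousLinearMap.smul_apply, inner_sum,
        inner_smul_right] using h2
    have hterm0 : ∀ p ∈ s, g p *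
        (inner ℂ eT (word A B D p.1 p.2.1 p.2.2.1 p.2.2.2 (e (n0, 0, 0))) : ℂ)
        = (if p.1 = p0.1 ∧ (p.2.1 : ℤ) - p.2.2.1 = (p0.2.1 : ℤ) - p0.2.2.1 ∧ p.2.2.2 = p0.2.2.2
            then g p * (c0 * q ^ (n0 * p.2.1) * (conj q) ^ (n0 * p.2.2.1)) else 0) := by
      intro p hp
      rw [heT, phi_eq hA hB hD p0 p n0 (h0 p0 hp0) (h0 p hp), mul_ite, mul_zero]
    have hz1 : ∑ p ∈ s, (if p.1 = p0.1 ∧ (p.2.1 : ℤ) - p.2.2.1 = (p0.2.1 : ℤ) - p0.2.2.1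
        ∧ p.2.2.2 = p0.2.2.2
        then g p * (c0 * q ^ (n0 * p.2.1) * (conj q) ^ (n0 * p.2.2.1)) else 0) = 0 :=
      (Finset.sum_congr rfl hterm0).symm.trans hz
    have hz2 : ∑ p ∈ sf, g p * (c0 * q ^ (n0 * p.2.1) * (conj q) ^ (n0 * p.2.2.1)) = 0 :=
      (Finset.sum_filter _ _).trans hz1
    have hz3 : c0 * ∑ p ∈ sf, g p * (x n0) ^ (p.2.1 + k0) = 0 := by
      rw [Finset.mul_sum]
      have hterm : ∀ p ∈ sf, c0 * (g p * (x n0) ^ (p.2.1 + k0))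
          = (g p * (c0 * q ^ (n0 * p.2.1) * (conj q) ^ (n0 * p.2.2.1)))
            * (q ^ (n0 * k0) * (conj q) ^ (n0 * m0)) := by
        intro p hpf
        have hc := (Finset.mem_filter.1 hpf).2
        have hxq : x n0 = (q * conj q) ^ n0 := by rw [hqq]
        rw [hxq]
        exact scalar_id q c0 (g p) n0 p.2.1 p.2.2.1 m0 k0 (by omega)
      rw [Finset.sum_congr rfl hterm, ← Finset.sum_mul, hz2, zero_mul]
    have hc0ne : c0 ≠ 0 := by
      simp only [hc0, ne_eq, Complex.ofReal_eq_zero]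
      exact ne_of_gt (alpha0_pos hq1 n0 p0.1)
    exact (mul_eq_zero.1 hz3).resolve_left hc0ne
  -- polynomial argument
  set P : Polynomial ℂ := ∑ p ∈ sf, Polynomial.C (g p) * Polynomial.X ^ (p.2.1 + k0) with hP
  have heval : ∀ n0 : ℕ, Bnd ≤ n0 → P.IsRoot (x n0) := by
    intro n0 hn0
    have := key n0 hn0
    simp only [Polynomial.IsRoot, hP, Polynomial.eval_finset_sum, Polynomial.eval_mul,
      Polynomial.eval_C, Polynomial.eval_pow, Polynomial.eval_X]
    exact this
  have habs1 : (0 : ℝ) < ‖q‖ ^ 2 := pow_pos hq0 2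
  have habs2 : ‖q‖ ^ 2 < 1 := pow_lt_one₀ (norm_nonneg q) hq1 (by omega)
  have hxinj : Function.Injective x := by
    intro a b hab
    have : ((‖q‖ ^ 2 : ℝ) : ℂ) ^ a = ((‖q‖ ^ 2 : ℝ) : ℂ) ^ b := by
      push_cast
      exact hab
    rw [← Complex.ofReal_pow, ← Complex.ofReal_pow, Complex.ofReal_inj] at this
    exact (pow_right_strictAnti₀ habs1 habs2).injective this
  have hinf : {z : ℂ | P.IsRoot z}.Infinite := by
    apply Set.infinite_of_injective_forall_mem (f := fun t : ℕ => x (Bnd + t))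
    · intro a b hab
      have := hxinj hab
      omega
    · intro t
      exact heval (Bnd + t) (by omega)
  have hP0 : P = 0 := Polynomial.eq_zero_of_infinite_isRoot P hinf
  have hcoeff : P.coeff (m0 + k0) = g p0 := by
    rw [hP, Polynomial.finset_sum_coeff]
    simp only [Polynomial.coeff_C_mul, Polynomial.coeff_X_pow]
    rw [Finset.sum_eq_single_of_mem p0
      (Finset.mem_filter.2 ⟨hp0, rfl, rfl, rfl⟩)]
    · simp [hm0]
    · intro p hpf hne
      have hc := (Finset.mem_filter.1 hpf).2
      obtain ⟨h1, h2, h3⟩ := hc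
      rw [if_neg, mul_zero]
      intro hEq
      apply hne
      rw [Prod.ext_iff]
      refine ⟨h1, ?_⟩
      rw [Prod.ext_iff]
      refine ⟨by omega, ?_⟩
      rw [Prod.ext_iff]
      exact ⟨by omega, h3⟩
  rw [hP0, Polynomial.coeff_zero] at hcoeff
  exact hcoeff.symm
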